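/- arXiv:2511.02635 — 7 statements merged into one kernel-verified Lean document; each statement's English description precedes it below -/
import Mathlib

section
/- Let T be a contraction on a Hilbert space H, and let Q be the positive square root of the strong operator limit of TⁿT*ⁿ. Then ‖Q T* h‖ = ‖Q h‖ for all h ∈ H; consequently, the densely defined map V* on the closure of Ran Q given by V*(Qh) = Q T* h is a well-defined isometry. -/
open ContinuousLinearMap Filter Topology

/-! `‖T*ⁿ h‖²` is the quadratic form of `TⁿT*ⁿ` at `h`, so it converges to `⟨Q²h, h⟩ = ‖Qh‖²`.
Replacing `h` by `T* h` only shifts this sequence by one index, so the limit is unchanged. -/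

section

variable {𝕜 E : Type*} [RCLike 𝕜] [NormedAddCommGroup E] [InnerProductSpace 𝕜 E]
  [CompleteSpace E]

theorem re_inner_pow_mul_adjoint_pow_apply_self (T : E →L[𝕜] E) (n : ℕ) (x : E) :
    RCLike.re (inner 𝕜 ((T ^ n * adjoint T ^ n) x) x) = ‖(adjoint T ^ n) x‖ ^ 2 := by
  have h_adj : adjoint (adjoint T ^ n) = T ^ n := by
    rw [← star_eq_adjoint, star_pow, star_eq_adjoint, adjoint_adjoint]
  rw [apply_norm_sq_eq_inner_adjoint_left, h_adj]
  rfl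

theorem IsSelfAdjoint.norm_apply_sq {Q : E →L[𝕜] E} (hQ : IsSelfAdjoint Q) (x : E) :
    ‖Q x‖ ^ 2 = RCLike.re (inner 𝕜 ((Q * Q) x) x) := by
  rw [apply_norm_sq_eq_inner_adjoint_left, isSelfAdjoint_iff'.mp hQ]
  rfl

theorem tendsto_norm_adjoint_pow_apply_sq {T P : E →L[𝕜] E}
    (hlim : ∀ x, Tendsto (fun n : ℕ => (T ^ n * adjoint T ^ n) x) atTop (𝓝 (P x))) (x : E) :
    Tendsto (fun n : ℕ => ‖(adjoint T ^ n) x‖ ^ 2) atTop (𝓝 (RCLike.re (inner 𝕜 (P x) x))) :=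
  (((RCLike.continuous_re.tendsto _).comp ((hlim x).inner tendsto_const_nhds)).congr
    fun n => re_inner_pow_mul_adjoint_pow_apply_self T n x)

/-- The identity `T P T* = P` for the strong limit `P` of `TⁿT*ⁿ`, in quadratic form. -/
theorem re_inner_apply_adjoint_of_tendsto {T P : E →L[𝕜] E}
    (hlim : ∀ x, Tendsto (fun n : ℕ => (T ^ n * adjoint T ^ n) x) atTop (𝓝 (P x))) (x : E) :
    RCLike.re (inner 𝕜 (P (adjoint T x)) (adjoint T x)) = RCLike.re (inner 𝕜 (P x) x) := by
  have h_shift : Tendsto (fun n : ℕ => ‖(adjoint T ^ n) (adjoint T x)‖ ^ 2) atTop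
      (𝓝 (RCLike.re (inner 𝕜 (P x) x))) :=
    ((tendsto_norm_adjoint_pow_apply_sq hlim x).comp (tendsto_add_atTop_nat 1)).congr
      fun n => by rw [Function.comp_apply, pow_succ (adjoint T) n]; rfl
  exact tendsto_nhds_unique (tendsto_norm_adjoint_pow_apply_sq hlim (adjoint T x)) h_shift

end

theorem Q_Tstar_isometry_general {H : Type*} [NormedAddCommGroup H] [InnerProductSpace ℂ H]
    [CompleteSpace H] (T Q : H →L[ℂ] H) (hQ : Q.IsPositive)
    (hlim : ∀ h : H,
      Tendsto (fun n : ℕ => (T ^ n * (adjoint T) ^ n) h) atTop (𝓝 ((Q * Q) h))) :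
    ∀ h : H, ‖Q (adjoint T h)‖ = ‖Q h‖ := by
  intro h
  rw [← sq_eq_sq₀ (norm_nonneg _) (norm_nonneg _), hQ.isSelfAdjoint.norm_apply_sq,
    hQ.isSelfAdjoint.norm_apply_sq, re_inner_apply_adjoint_of_tendsto hlim]

/-- Let `T` be a contraction on a complex Hilbert space and `Q` the positive square root of
the strong operator limit of `TⁿT*ⁿ` (i.e. `Q ≥ 0` and `TⁿT*ⁿ → Q²` strongly).  Then
`‖Q T* h‖ = ‖Q h‖` for all `h`; consequently the densely defined map `V*(Qh) = Q T* h`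
on the closure of `Ran Q` is a well-defined isometry. -/
theorem Q_Tstar_isometry {H : Type*} [NormedAddCommGroup H] [InnerProductSpace ℂ H]
    [CompleteSpace H] (T Q : H →L[ℂ] H) (hT : ‖T‖ ≤ 1) (hQ : Q.IsPositive)
    (hlim : ∀ h : H,
      Tendsto (fun n : ℕ => (T ^ n * (adjoint T) ^ n) h) atTop (𝓝 ((Q * Q) h))) :
    ∀ h : H, ‖Q (adjoint T h)‖ = ‖Q h‖ :=
  Q_Tstar_isometry_general T Q hQ hlim
end

section
/- Let V be a unitary operator on a Hilbert space H₂ and T an operator on a Hilbert space H₁ such that T*ⁿ → 0 in the strong operator topology. If X : H₂ → H₁ is a bounded operator satisfying X V = T X, then X = 0. -/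
/-!
Taking adjoints turns `X V = T X` into `X* T*ⁿ = V*ⁿ X*`, and `V*` is an isometry because
`V V* = 1`. Hence `‖X* h‖ = ‖V*ⁿ X* h‖ = ‖X* T*ⁿ h‖ → 0`, so `X* = 0`.
-/

open ContinuousLinearMap Filter Topology

theorem ContinuousLinearMap.eq_zero_of_semiconj_norm_map {𝕜 E F : Type*} [NormedField 𝕜]
    [SeminormedAddCommGroup E] [NormedAddCommGroup F] [NormedSpace 𝕜 E] [NormedSpace 𝕜 F]
    {Y : E →L[𝕜] F} {R : E →L[𝕜] E} {S : F →L[𝕜] F} (hY : Function.Semiconj Y R S)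
    (hS : ∀ y, ‖S y‖ = ‖y‖) (hR : ∀ h, Tendsto (fun n : ℕ => (R ^ n) h) atTop (𝓝 0)) :
    Y = 0 := by
  ext h
  have hconst : (fun n : ℕ => ‖Y ((R ^ n) h)‖) = fun _ => ‖Y h‖ := by
    funext n
    rw [FunLike.coe_pow_eq_iterate, hY.iterate_right n h]
    exact congrFun (Function.iterate_invariant (funext hS) n) (Y h)
  have hlim : Tendsto (fun n : ℕ => ‖Y ((R ^ n) h)‖) atTop (𝓝 0) := by
    simpa using ((Y.continuous.tendsto 0).comp (hR h)).norm
  rwa [hconst, tendsto_const_nhds_iff, norm_eq_zero] at hlim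

theorem ContinuousLinearMap.semiconj_adjoint {𝕜 E F : Type*} [RCLike 𝕜]
    [NormedAddCommGroup E] [InnerProductSpace 𝕜 E] [CompleteSpace E]
    [NormedAddCommGroup F] [InnerProductSpace 𝕜 F] [CompleteSpace F]
    {X : E →L[𝕜] F} {V : E →L[𝕜] E} {T : F →L[𝕜] F} (hX : X ∘L V = T ∘L X) :
    Function.Semiconj (adjoint X) (adjoint T) (adjoint V) := fun h => by
  simpa [adjoint_comp] using congr(adjoint $hX h).symm

theorem intertwiner_zero_general {H₁ H₂ : Type*} [NormedAddCommGroup H₁] [InnerProductSpace ℂ H₁]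
    [CompleteSpace H₁] [NormedAddCommGroup H₂] [InnerProductSpace ℂ H₂] [CompleteSpace H₂]
    (V : H₂ →L[ℂ] H₂) (hV₂ : V * adjoint V = 1)
    (T : H₁ →L[ℂ] H₁)
    (hT : ∀ h : H₁, Tendsto (fun n : ℕ => ((adjoint T) ^ n) h) atTop (𝓝 0))
    (X : H₂ →L[ℂ] H₁) (hX : X ∘L V = T ∘L X) :
    X = 0 := by
  have hV : ∀ y, ‖adjoint V y‖ = ‖y‖ :=
    (norm_map_iff_adjoint_comp_self _).2 (by rwa [adjoint_adjoint, ← mul_def])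
  have hXadj : adjoint X = 0 := eq_zero_of_semiconj_norm_map (semiconj_adjoint hX) hV hT
  simpa using congr(adjoint $hXadj)

/-- Let `V` be a unitary on a Hilbert space `H₂` and `T` an operator on `H₁` with
`T*ⁿ → 0` in the strong operator topology.  If `X : H₂ → H₁` is bounded and `X V = T X`,
then `X = 0`. -/
theorem intertwiner_zero {H₁ H₂ : Type*} [NormedAddCommGroup H₁] [InnerProductSpace ℂ H₁]
    [CompleteSpace H₁] [NormedAddCommGroup H₂] [InnerProductSpace ℂ H₂] [CompleteSpace H₂]
    (V : H₂ →L[ℂ] H₂) (hV₁ : adjoint V * V = 1) (hV₂ : V * adjoint V = 1)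
    (T : H₁ →L[ℂ] H₁)
    (hT : ∀ h : H₁, Tendsto (fun n : ℕ => ((adjoint T) ^ n) h) atTop (𝓝 0))
    (X : H₂ →L[ℂ] H₁) (hX : X ∘L V = T ∘L X) :
    X = 0 :=
  intertwiner_zero_general V hV₂ T hT X hX
end

section
/- Let T be a pure contraction on a Hilbert space H (T*ⁿ → 0 strongly), W : H → H²(𝔻) ⊗ 𝒟_{T*} the isometry Wh = Σ_{n≥0} zⁿ ⊗ D_{T*}T*ⁿh, and F̃, F̃' bounded operators on 𝒟_{T*}. Then the operators A = W*(I ⊗ F̃* + M_z ⊗ F̃')W and B = W*(I ⊗ F̃'* + M_z ⊗ F̃)W and T satisfy A* − B T* = D_{T*} F̃ D_{T*}. -/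
open ContinuousLinearMap Filter Topology

/-- Let `T` be a pure contraction on a complex Hilbert space `H` (`T*ⁿ → 0` strongly),
`D'` the defect operator `D_{T*}`, and `W : H → H²(𝔻) ⊗ 𝒟_{T*} ≅ ℓ²(ℕ, H)` the canonical
isometry `(W h)ₙ = D_{T*} T*ⁿ h`.  For bounded operators `F, F'` (the operators `F̃, F̃'`
on `𝒟_{T*}`), let `Aop = I ⊗ F̃* + M_z ⊗ F̃'` and `Bop = I ⊗ F̃'* + M_z ⊗ F̃` on the Hardy
space, and set `A = W* Aop W`, `B = W* Bop W`.  Then `A* - B T* = D_{T*} F̃ D_{T*}`. -/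
theorem fundamental_eq_of_compression {H : Type*} [NormedAddCommGroup H]
    [InnerProductSpace ℂ H] [CompleteSpace H] (T D' F F' : H →L[ℂ] H) (hT : ‖T‖ ≤ 1)
    (hpure : ∀ h : H, Tendsto (fun n : ℕ => ((adjoint T) ^ n) h) atTop (𝓝 0))
    (hD' : D'.IsPositive) (hD'2 : D' * D' = 1 - T * adjoint T)
    (W : H →L[ℂ] lp (fun _ : ℕ => H) 2)
    (hW : ∀ (h : H) (n : ℕ), (W h) n = D' (((adjoint T) ^ n) h))
    (Aop Bop : lp (fun _ : ℕ => H) 2 →L[ℂ] lp (fun _ : ℕ => H) 2)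
    (hA0 : ∀ f : lp (fun _ : ℕ => H) 2, (Aop f) 0 = adjoint F (f 0))
    (hAs : ∀ (f : lp (fun _ : ℕ => H) 2) (n : ℕ),
      (Aop f) (n + 1) = adjoint F (f (n + 1)) + F' (f n))
    (hB0 : ∀ f : lp (fun _ : ℕ => H) 2, (Bop f) 0 = adjoint F' (f 0))
    (hBs : ∀ (f : lp (fun _ : ℕ => H) 2) (n : ℕ),
      (Bop f) (n + 1) = adjoint F' (f (n + 1)) + F (f n)) :
    adjoint (adjoint W ∘L Aop ∘L W) - (adjoint W ∘L Bop ∘L W) ∘L adjoint T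
      = D' ∘L F ∘L D' := by
  set T' : H →L[ℂ] H := adjoint T with hT'
  ext x
  apply ext_inner_right ℂ
  intro y
  -- sequences appearing in the two inner products
  set a : ℕ → ℂ := fun n => @inner ℂ _ _ ((W x) n) ((Aop (W y)) n) with ha_def
  set b : ℕ → ℂ := fun n => @inner ℂ _ _ ((Bop (W (T' x))) n) ((W y) n) with hb_def
  set u : ℕ → ℂ :=
    fun n => @inner ℂ _ _ (D' ((T' ^ (n + 1)) x)) (F' (D' ((T' ^ n) y))) with hu_def
  set K : ℂ := @inner ℂ _ _ (F (D' x)) (D' y) with hK_def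
  have hpow : ∀ (h : H) (n : ℕ), (T' ^ (n + 1)) h = (T' ^ n) (T' h) := by
    intro h n
    rw [pow_succ]
    rfl
  have ha : Summable a := lp.summable_inner (W x) (Aop (W y))
  have hb' : Summable b := lp.summable_inner (Bop (W (T' x))) (W y)
  -- value of `a - b` at 0 and successors
  have hc0 : a 0 - b 0 = K - u 0 := by
    have e1 : a 0 = K := by
      simp only [ha_def, hW, hA0, pow_zero, ContinuousLinearMap.one_apply, hK_def, adjoint_inner_right]
    have e2 : b 0 = u 0 := by
      simp only [hb_def, hB0, hW, pow_zero, ContinuousLinearMap.one_apply, hu_def, adjoint_inner_left,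
        zero_add, pow_one]
    rw [e1, e2]
  have hcs : ∀ n : ℕ, a (n + 1) - b (n + 1) = u n - u (n + 1) := by
    intro n
    have e1 : a (n + 1)
        = @inner ℂ _ _ (F (D' ((T' ^ (n + 1)) x))) (D' ((T' ^ (n + 1)) y)) + u n := by
      simp only [ha_def, hAs, hW, inner_add_right, adjoint_inner_right, hu_def]
    have e2 : b (n + 1)
        = u (n + 1) + @inner ℂ _ _ (F (D' ((T' ^ (n + 1)) x))) (D' ((T' ^ (n + 1)) y)) := by
      simp only [hb_def, hBs, hW, inner_add_left, adjoint_inner_left, hu_def, hpow]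
    rw [e1, e2]; ring
  -- `u n → 0`
  have hu0 : Tendsto u atTop (𝓝 0) := by
    have h1 : Tendsto (fun n : ℕ => D' ((T' ^ (n + 1)) x)) atTop (𝓝 0) := by
      have := (D'.continuous.tendsto 0).comp (hpure (T' x))
      rw [map_zero] at this
      simpa only [Function.comp_def, hpow] using this
    have h2 : Tendsto (fun n : ℕ => F' (D' ((T' ^ n) y))) atTop (𝓝 0) := by
      have := ((F' ∘L D').continuous.tendsto 0).comp (hpure y)
      rw [map_zero] at this
      simpa only [Function.comp_def, comp_apply] using this
    have := Filter.Tendsto.inner (𝕜 := ℂ) h1 h2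
    simpa [hu_def] using this
  -- telescoping: `∑ (a n - b n) = K`
  have hsum : ∑' n, (a n - b n) = K := by
    have hc : Summable (fun n => a n - b n) := ha.sub hb'
    have hten : Tendsto (fun N : ℕ => ∑ n ∈ Finset.range N, (a n - b n)) atTop
        (𝓝 (∑' n, (a n - b n))) := hc.hasSum.tendsto_sum_nat
    have hten' : Tendsto (fun N : ℕ => ∑ n ∈ Finset.range (N + 1), (a n - b n)) atTop
        (𝓝 (∑' n, (a n - b n))) := hten.comp (tendsto_add_atTop_nat 1)
    have heq : ∀ N : ℕ, ∑ n ∈ Finset.range (N + 1), (a n - b n) = K - u N := by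
      intro N
      rw [Finset.sum_range_succ', hc0]
      have : ∀ i ∈ Finset.range N, a (i + 1) - b (i + 1) = u i - u (i + 1) := by
        intro i _; exact hcs i
      rw [Finset.sum_congr rfl this, Finset.sum_range_sub' u]
      ring
    have hten'' : Tendsto (fun N : ℕ => ∑ n ∈ Finset.range (N + 1), (a n - b n)) atTop
        (𝓝 K) := by
      simp only [heq]
      have := (tendsto_const_nhds (x := K) (f := atTop (α := ℕ))).sub hu0
      simpa using this
    exact tendsto_nhds_unique hten' hten''
  -- assemble
  have hL : @inner ℂ _ _
      ((adjoint (adjoint W ∘L Aop ∘L W) - (adjoint W ∘L Bop ∘L W) ∘L adjoint T) x) y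
      = ∑' n, (a n - b n) := by
    rw [sub_apply, inner_sub_left]
    have h1 : @inner ℂ _ _ (adjoint (adjoint W ∘L Aop ∘L W) x) y
        = ∑' n, a n := by
      rw [adjoint_inner_left]
      simp only [comp_apply, adjoint_inner_right]
      exact lp.inner_eq_tsum (W x) (Aop (W y))
    have h2 : @inner ℂ _ _ (((adjoint W ∘L Bop ∘L W) ∘L adjoint T) x) y
        = ∑' n, b n := by
      simp only [comp_apply, adjoint_inner_left]
      exact lp.inner_eq_tsum (Bop (W (T' x))) (W y)
    rw [h1, h2, ← Summable.tsum_sub ha hb']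
  have hR : @inner ℂ _ _ ((D' ∘L F ∘L D') x) y = K := by
    simp only [comp_apply, hK_def]
    nth_rewrite 1 [← hD'.isSelfAdjoint.adjoint_eq]
    rw [adjoint_inner_left]
  rw [hL, hR, hsum]
end

section
/- Let A be a bounded operator commuting with the unilateral shift M_z on the vector-valued Hardy space H²(E), and suppose A = B* M_z for some bounded operator B also commuting with M_z. Then there exist bounded operators F, F' on E such that A is the Toeplitz operator with symbol F* + F'z. -/
/-!
An operator `T` commuting with the shift is a lower-triangular Toeplitz matrix: splitting
`f = e₀ f₀ + S S* f` and inducting on the coordinate gives `(T f)ₙ = ∑_{k ≤ n} (T (e₀ fₙ₋ₖ))ₖ`.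
For `A = B* S` the column `A (e₀ x)` lives in degrees `0, 1`, because its entry `k + 2` pairs
with `(B (e_{k+2} y))₁ = (S² B (eₖ y))₁ = 0`. The two surviving entries give `F*` and `F'`.
-/

open ContinuousLinearMap

section Shift

variable {E : Type*} [NormedAddCommGroup E] [NormedSpace ℂ E] {p : ENNReal} [Fact (1 ≤ p)]
  {S : lp (fun _ : ℕ => E) p →L[ℂ] lp (fun _ : ℕ => E) p}

theorem shift_lp_single (hS0 : ∀ f, S f 0 = 0) (hSs : ∀ f n, S f (n + 1) = f n) (n : ℕ) (x : E) :
    S (lp.single p n x) = lp.single p (n + 1) x := by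
  ext (_ | j)
  · simp [hS0, lp.single_apply]
  · simp [hSs, lp.single_apply, Pi.single_apply]

theorem apply_shift_apply_zero (hS0 : ∀ f, S f 0 = 0)
    {T : lp (fun _ : ℕ => E) p →L[ℂ] lp (fun _ : ℕ => E) p}
    (hTS : T ∘L S = S ∘L T) (g : lp (fun _ : ℕ => E) p) : T (S g) 0 = 0 := by
  rw [← comp_apply, hTS, comp_apply, hS0]

end Shift

section Hilbert

variable {E : Type*} [NormedAddCommGroup E] [InnerProductSpace ℂ E] [CompleteSpace E]
  {S : lp (fun _ : ℕ => E) 2 →L[ℂ] lp (fun _ : ℕ => E) 2}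
  (hS0 : ∀ f, S f 0 = 0) (hSs : ∀ f n, S f (n + 1) = f n)
include hS0 hSs

theorem adjoint_shift_apply (f : lp (fun _ : ℕ => E) 2) (n : ℕ) : adjoint S f n = f (n + 1) := by
  refine ext_inner_right ℂ fun y => ?_
  rw [← lp.inner_single_right, adjoint_inner_left, shift_lp_single hS0 hSs, lp.inner_single_right]

theorem eq_single_zero_add_shift_adjoint (f : lp (fun _ : ℕ => E) 2) :
    f = lp.single 2 0 (f 0) + S (adjoint S f) := by
  ext (_ | n) <;> simp [hS0, hSs, adjoint_shift_apply hS0 hSs, lp.single_apply]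

theorem apply_eq_sum_of_comp_shift {T : lp (fun _ : ℕ => E) 2 →L[ℂ] lp (fun _ : ℕ => E) 2}
    (hTS : T ∘L S = S ∘L T) (f : lp (fun _ : ℕ => E) 2) (n : ℕ) :
    T f n = ∑ k ∈ Finset.range (n + 1), T (lp.single 2 0 (f (n - k))) k := by
  induction n generalizing f with
  | zero =>
    conv_lhs => rw [eq_single_zero_add_shift_adjoint hS0 hSs f]
    simp [apply_shift_apply_zero hS0 hTS]
  | succ n ih =>
    have hrec : T f (n + 1) = T (adjoint S f) n + T (lp.single 2 0 (f 0)) (n + 1) := by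
      conv_lhs => rw [eq_single_zero_add_shift_adjoint hS0 hSs f]
      rw [map_add, ← comp_apply T S, hTS, lp.coeFn_add, Pi.add_apply, comp_apply, hSs]
      exact add_comm _ _
    rw [Finset.sum_range_succ, Nat.sub_self, hrec, ih]
    congr 1
    refine Finset.sum_congr rfl fun k hk => ?_
    rw [adjoint_shift_apply hS0 hSs, show n - k + 1 = n + 1 - k by grind]

theorem adjoint_apply_shift_single_zero_apply_add_two
    {B : lp (fun _ : ℕ => E) 2 →L[ℂ] lp (fun _ : ℕ => E) 2} (hBS : B ∘L S = S ∘L B)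
    (x : E) (k : ℕ) : adjoint B (S (lp.single 2 0 x)) (k + 2) = 0 := by
  refine ext_inner_right ℂ fun y => ?_
  rw [← lp.inner_single_right, adjoint_inner_left, shift_lp_single hS0 hSs, lp.inner_single_left,
    ← shift_lp_single hS0 hSs, ← comp_apply B S, hBS, comp_apply, hSs, ← shift_lp_single hS0 hSs,
    apply_shift_apply_zero hS0 hBS, inner_zero_right, inner_zero_left]

end Hilbert

/-- Identify the vector-valued Hardy space `H²(E)` with `ℓ²(ℕ, E)` and let `S` be the
unilateral shift `M_z`.  If `A` commutes with `S` and `A = B* S` for some bounded operator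
`B` also commuting with `S`, then there are bounded operators `F, F'` on `E` such that `A`
is the (analytic) Toeplitz operator with symbol `F* + F' z`, i.e.
`(A f)₀ = F* f₀` and `(A f)ₙ₊₁ = F* fₙ₊₁ + F' fₙ`. -/
theorem commutant_shift_symbol {E : Type*} [NormedAddCommGroup E] [InnerProductSpace ℂ E]
    [CompleteSpace E]
    (S A B : lp (fun _ : ℕ => E) 2 →L[ℂ] lp (fun _ : ℕ => E) 2)
    (hS0 : ∀ f : lp (fun _ : ℕ => E) 2, (S f) 0 = 0)
    (hSs : ∀ (f : lp (fun _ : ℕ => E) 2) (n : ℕ), (S f) (n + 1) = f n)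
    (hAS : A ∘L S = S ∘L A) (hBS : B ∘L S = S ∘L B)
    (hA : A = adjoint B ∘L S) :
    ∃ F F' : E →L[ℂ] E,
      (∀ f : lp (fun _ : ℕ => E) 2, (A f) 0 = adjoint F (f 0)) ∧
      ∀ (f : lp (fun _ : ℕ => E) 2) (n : ℕ),
        (A f) (n + 1) = adjoint F (f (n + 1)) + F' (f n) := by
  have hcolumn_add_two : ∀ (x : E) (k : ℕ), A (lp.single 2 0 x) (k + 2) = 0 := fun x k => by
    rw [hA, comp_apply]
    exact adjoint_apply_shift_single_zero_apply_add_two hS0 hSs hBS x k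
  let column (k : ℕ) : E →L[ℂ] E :=
    lp.evalCLM ℂ (fun _ => E) 2 k ∘L A ∘L lp.singleContinuousLinearMap ℂ (fun _ => E) 2 0
  have hcolumn (k : ℕ) (x : E) : column k x = A (lp.single 2 0 x) k := rfl
  refine ⟨adjoint (column 0), column 1, fun f => ?_, fun f n => ?_⟩
  · rw [adjoint_adjoint, apply_eq_sum_of_comp_shift hS0 hSs hAS]
    simp [hcolumn]
  · rw [adjoint_adjoint, apply_eq_sum_of_comp_shift hS0 hSs hAS, Finset.sum_range_succ',
      Finset.sum_range_succ']
    simp [hcolumn_add_two, hcolumn, add_comm]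
end

section
/- Let T, S be commuting bounded operators on Hilbert spaces H, and suppose T = S* V where V is an isometry commuting with both T and S, and S = T* V. Then T is hyponormal. -/
/-!
Hyponormality of `T` means `‖T† x‖ ≤ ‖T x‖` for every `x`. Here `T† = V† S` with `V†`
a contraction, so `‖T† x‖ ≤ ‖S x‖`, while commutativity gives
`‖S x‖² = ⟪T† V x, S x⟫ = ⟪V x, T S x⟫ = ⟪V x, S T x⟫ = ⟪S† V x, T x⟫ = ‖T x‖²`.
-/

open ContinuousLinearMap

namespace ContinuousLinearMap

variable {𝕜 E F : Type*} [RCLike 𝕜]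
  [NormedAddCommGroup E] [InnerProductSpace 𝕜 E] [CompleteSpace E]
  [NormedAddCommGroup F] [InnerProductSpace 𝕜 F] [CompleteSpace F]

theorem isPositive_adjoint_mul_self_sub_mul_adjoint_iff (T : E →L[𝕜] E) :
    (adjoint T * T - T * adjoint T).IsPositive ↔ ∀ x, ‖adjoint T x‖ ≤ ‖T x‖ := by
  have hsa : IsSelfAdjoint (adjoint T * T - T * adjoint T) :=
    (IsSelfAdjoint.star_mul_self T).sub (IsSelfAdjoint.mul_star_self T)
  have hre (x : E) : (adjoint T * T - T * adjoint T).reApplyInnerSelf x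
      = ‖T x‖ ^ 2 - ‖adjoint T x‖ ^ 2 := by
    rw [apply_norm_sq_eq_inner_adjoint_left, apply_norm_sq_eq_inner_adjoint_left, adjoint_adjoint,
      reApplyInnerSelf_apply, sub_apply, inner_sub_left, map_sub]
    rfl
  simp only [isPositive_def', hsa, true_and, hre, sub_nonneg]
  exact forall_congr' fun x => pow_le_pow_iff_left₀ (norm_nonneg _) (norm_nonneg _) two_ne_zero

theorem norm_adjoint_apply_le_of_adjoint_comp_self_eq_one {V : E →L[𝕜] F}
    (hV : adjoint V ∘L V = 1) (y : F) : ‖adjoint V y‖ ≤ ‖y‖ := by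
  have hV_le_one : ‖V‖ ≤ 1 :=
    opNorm_le_bound V zero_le_one fun x => by rw [V.norm_map_iff_adjoint_comp_self.mpr hV, one_mul]
  calc ‖adjoint V y‖ ≤ ‖adjoint V‖ * ‖y‖ := le_opNorm _ _
    _ ≤ ‖y‖ := by
      rw [adjoint.norm_map]
      exact mul_le_of_le_one_left (norm_nonneg _) hV_le_one

theorem norm_apply_eq_of_commute_of_eq_adjoint_mul {T S V : E →L[𝕜] E} (hTS : T * S = S * T)
    (hT : T = adjoint S * V) (hS : S = adjoint T * V) (x : E) : ‖S x‖ = ‖T x‖ := by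
  have hinner : inner 𝕜 (S x) (S x) = inner 𝕜 (T x) (T x) :=
    calc inner 𝕜 (S x) (S x) = inner 𝕜 (V x) (T (S x)) := by
          conv_lhs => arg 2; rw [hS]
          exact adjoint_inner_left T (S x) (V x)
      _ = inner 𝕜 (V x) (S (T x)) := congrArg (inner 𝕜 (V x)) congr($hTS x)
      _ = inner 𝕜 (T x) (T x) := by
          conv_rhs => arg 2; rw [hT]
          exact (adjoint_inner_left S (T x) (V x)).symm
  simpa using congrArg (fun z : 𝕜 => √(RCLike.re z)) hinner

end ContinuousLinearMap

theorem hyponormal_of_Gamma_isometry_component_general {H : Type*} [NormedAddCommGroup H]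
    [InnerProductSpace ℂ H] [CompleteSpace H] (T S V : H →L[ℂ] H)
    (hV : adjoint V * V = 1)
    (hTS : T * S = S * T) (hT : T = adjoint S * V) (hS : S = adjoint T * V) :
    (adjoint T * T - T * adjoint T).IsPositive := by
  rw [isPositive_adjoint_mul_self_sub_mul_adjoint_iff]
  intro x
  have hT_adjoint : adjoint T = adjoint V * S := by
    rw [hT, mul_def, adjoint_comp, adjoint_adjoint]
    rfl
  calc ‖adjoint T x‖ = ‖adjoint V (S x)‖ := by rw [hT_adjoint]; rfl
    _ ≤ ‖S x‖ := norm_adjoint_apply_le_of_adjoint_comp_self_eq_one hV (S x)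
    _ = ‖T x‖ := norm_apply_eq_of_commute_of_eq_adjoint_mul hTS hT hS x

/-- Let `T, S` be commuting bounded operators on a Hilbert space, `V` an isometry
commuting with both, with `T = S* V` and `S = T* V`.  Then `T` is hyponormal
(`T*T - TT* ≥ 0`). -/
theorem hyponormal_of_Gamma_isometry_component {H : Type*} [NormedAddCommGroup H]
    [InnerProductSpace ℂ H] [CompleteSpace H] (T S V : H →L[ℂ] H)
    (hV : adjoint V * V = 1) (hTV : T * V = V * T) (hSV : S * V = V * S)
    (hTS : T * S = S * T) (hT : T = adjoint S * V) (hS : S = adjoint T * V) :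
    (adjoint T * T - T * adjoint T).IsPositive :=
  hyponormal_of_Gamma_isometry_component_general T S V hV hTS hT hS
end

section
/- Let N be a normal operator on a Hilbert space, U a unitary commuting with N, and n ≥ 0. Then Uⁿ⁺¹ N* = N* Uⁿ⁺¹. More generally (Fuglede), if a bounded operator B commutes with a normal operator N, then B commutes with N*. -/
open ContinuousLinearMap

theorem fuglede_general {H : Type*} [NormedAddCommGroup H] [InnerProductSpace ℂ H]
    [CompleteSpace H] (N U B : H →L[ℂ] H)
    (hN : adjoint N * N = N * adjoint N)
    (hUN : U * N = N * U) (hBN : B * N = N * B) :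
    (∀ n : ℕ, U ^ (n + 1) * adjoint N = adjoint N * U ^ (n + 1)) ∧
      B * adjoint N = adjoint N * B := by
  have hNormal : IsStarNormal N := ⟨hN⟩
  exact ⟨fun n => (hNormal.commute_star_right (Commute.pow_left hUN (n + 1))).eq,
    (hNormal.commute_star_right hBN).eq⟩

/-- Let `N` be a normal operator on a complex Hilbert space and `U` a unitary commuting
with `N`.  Then `Uⁿ⁺¹ N* = N* Uⁿ⁺¹` for every `n ≥ 0`.  More generally (Fuglede), every
bounded operator `B` commuting with `N` also commutes with `N*`. -/
theorem fuglede {H : Type*} [NormedAddCommGroup H] [InnerProductSpace ℂ H]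
    [CompleteSpace H] (N U B : H →L[ℂ] H)
    (hN : adjoint N * N = N * adjoint N)
    (hU₁ : adjoint U * U = 1) (hU₂ : U * adjoint U = 1)
    (hUN : U * N = N * U) (hBN : B * N = N * B) :
    (∀ n : ℕ, U ^ (n + 1) * adjoint N = adjoint N * U ^ (n + 1)) ∧
      B * adjoint N = adjoint N * B :=
  fuglede_general N U B hN hUN hBN
end

section
/- Let T be a contraction on H, F₁,…,F₆ bounded operators on 𝒟_T with w(Fᵢ + F*_{7−i} z) ≤ 1 for all z ∈ 𝕋 and each i, and define on H ⊕ H²(𝒟_T) the operators V⁽ⁱ⁾ = (Tᵢ 0; F*_{7−i}D_T M_{Fᵢ + F*_{7−i}z}) and V⁽⁷⁾ = (T 0; D_T M_z), where Tᵢ − T*_{7−i}T = D_T Fᵢ D_T. Then V⁽⁷⁾ is an isometry and V⁽ⁱ⁾ = V⁽⁷⁻ⁱ⁾* V⁽⁷⁾ for each 1 ≤ i ≤ 6. -/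
open ContinuousLinearMap Filter Topology

/-- The numerical radius `w(T) = sup_{‖x‖ ≤ 1} ‖⟨T x, x⟩‖`. -/
noncomputable def numRadius {H : Type*} [NormedAddCommGroup H] [InnerProductSpace ℂ H]
    (T : H →L[ℂ] H) : ℝ :=
  sSup {r : ℝ | ∃ x : H, ‖x‖ ≤ 1 ∧ r = ‖(inner ℂ (T x) x : ℂ)‖}

/-- The index pairing `i ↔ 7 - i` on `{1, …, 6}`, realized on `Fin 6`. -/
def rev (i : Fin 6) : Fin 6 := ⟨5 - i.1, by omega⟩

/-!
`V⁽⁷⁾` is Schäffer's isometric dilation: `‖T h‖² + ‖D h‖² = ‖h‖²` because `D² = I - T*T`, and the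
shift part is isometric. For the other blocks, note that the `H²`-part of `V⁽ⁱ⁾ x` is
`Fᵢ x₂ + F*₇₋ᵢ y`, coefficientwise, where `y` is the `H²`-part of `V⁽⁷⁾ x`. Expanding
`⟪V⁽ⁱ⁾ x, z⟫` and `⟪V⁽⁷⁾ x, V⁽⁷⁻ⁱ⁾ z⟫` blockwise, the two sides differ in the `H²`-part only by
the constant-coefficient term `⟪Fᵢ D x₁, D z₁⟫`, and the fundamental equation
`Tᵢ = T*₇₋ᵢ T + D Fᵢ D` supplies exactly this term in the `H`-part.
-/

open scoped InnerProductSpace ENNReal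

@[simp]
lemma rev_rev (i : Fin 6) : rev (rev i) = i := by
  ext
  simp only [rev]
  omega

lemma WithLp.prod_inner_fst_snd {𝕜 E F : Type*} [RCLike 𝕜] [NormedAddCommGroup E]
    [InnerProductSpace 𝕜 E] [NormedAddCommGroup F] [InnerProductSpace 𝕜 F]
    (x y : WithLp 2 (E × F)) : ⟪x, y⟫_𝕜 = ⟪x.fst, y.fst⟫_𝕜 + ⟪x.snd, y.snd⟫_𝕜 :=
  rfl

section lp

variable {𝕜 E : Type*} [RCLike 𝕜] [NormedAddCommGroup E] [InnerProductSpace 𝕜 E]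

lemma lp.inner_eq_inner_zero_add_of_succ {f g f' g' : lp (fun _ : ℕ => E) 2}
    (hf : ∀ n, f (n + 1) = f' n) (hg : ∀ n, g (n + 1) = g' n) :
    ⟪f, g⟫_𝕜 = ⟪f 0, g 0⟫_𝕜 + ⟪f', g'⟫_𝕜 := by
  rw [lp.inner_eq_tsum, (lp.summable_inner (𝕜 := 𝕜) f g).tsum_eq_zero_add, lp.inner_eq_tsum]
  exact congrArg _ (tsum_congr fun n => by rw [hf, hg])

variable {ι : Type*} {p : ℝ≥0∞}

/-- `A ⊕ A ⊕ ⋯`; on `H²(E) ≅ ℓ²(ℕ, E)` this is the Toeplitz operator with constant symbol `A`. -/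
def lpDiag (A : E →L[𝕜] E) (f : lp (fun _ : ι => E) p) : lp (fun _ : ι => E) p :=
  ⟨fun n => A (f n), ((lp.memℓp f).norm.const_smul ‖A‖).mono fun n => A.le_opNorm (f n)⟩

@[simp]
lemma lpDiag_apply (A : E →L[𝕜] E) (f : lp (fun _ : ι => E) p) (n : ι) :
    lpDiag A f n = A (f n) :=
  rfl

lemma inner_lpDiag_left [CompleteSpace E] (A : E →L[𝕜] E) (f g : lp (fun _ : ι => E) 2) :
    ⟪lpDiag A f, g⟫_𝕜 = ⟪f, lpDiag (adjoint A) g⟫_𝕜 := by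
  simp only [lp.inner_eq_tsum, lpDiag_apply, adjoint_inner_right]

end lp

section Dilation

variable {𝕜 H : Type*} [RCLike 𝕜] [NormedAddCommGroup H] [InnerProductSpace 𝕜 H]
  {T D : H →L[𝕜] H}

lemma inner_lpDiag_snd_of_shift
    {W : WithLp 2 (H × lp (fun _ : ℕ => H) 2) → WithLp 2 (H × lp (fun _ : ℕ => H) 2)}
    (hWzero : ∀ x, (W x).snd 0 = D x.fst) (hWsucc : ∀ x n, (W x).snd (n + 1) = x.snd n)
    (A : H →L[𝕜] H) (x z : WithLp 2 (H × lp (fun _ : ℕ => H) 2)) :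
    ⟪lpDiag A (W x).snd, (W z).snd⟫_𝕜 = ⟪A (D x.fst), D z.fst⟫_𝕜 + ⟪lpDiag A x.snd, z.snd⟫_𝕜 := by
  rw [lp.inner_eq_inner_zero_add_of_succ (f' := lpDiag A x.snd)
    (fun n => by rw [lpDiag_apply, lpDiag_apply, hWsucc]) (hWsucc z), lpDiag_apply, hWzero,
    hWzero]

variable [CompleteSpace H]

lemma inner_add_inner_of_defect (hD : IsSelfAdjoint D) (hD2 : D * D = 1 - adjoint T * T)
    (x y : H) : ⟪T x, T y⟫_𝕜 + ⟪D x, D y⟫_𝕜 = ⟪x, y⟫_𝕜 := by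
  have hsum : adjoint T * T + adjoint D * D = 1 := by rw [hD.adjoint_eq, hD2, add_sub_cancel]
  rw [← adjoint_inner_right, ← adjoint_inner_right, ← inner_add_right, ← mul_apply_eq_comp,
    ← mul_apply_eq_comp, ← add_apply, hsum, one_apply_eq_self]

lemma inner_apply_eq_of_fundamental {A B F : H →L[𝕜] H} (hD : IsSelfAdjoint D)
    (hfund : A - adjoint B * T = D * F * D) (x y : H) :
    ⟪A x, y⟫_𝕜 = ⟪T x, B y⟫_𝕜 + ⟪F (D x), D y⟫_𝕜 := by
  rw [sub_eq_iff_eq_add'.mp hfund, add_apply, inner_add_left, mul_apply_eq_comp,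
    adjoint_inner_left, mul_apply_eq_comp, mul_apply_eq_comp, ← hD.adjoint_eq,
    adjoint_inner_left, hD.adjoint_eq]

lemma inner_map_map_of_defect_shift (hD : IsSelfAdjoint D) (hD2 : D * D = 1 - adjoint T * T)
    {W : WithLp 2 (H × lp (fun _ : ℕ => H) 2) → WithLp 2 (H × lp (fun _ : ℕ => H) 2)}
    (hWfst : ∀ x, (W x).fst = T x.fst) (hWzero : ∀ x, (W x).snd 0 = D x.fst)
    (hWsucc : ∀ x n, (W x).snd (n + 1) = x.snd n) (x z : WithLp 2 (H × lp (fun _ : ℕ => H) 2)) :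
    ⟪W x, W z⟫_𝕜 = ⟪x, z⟫_𝕜 := by
  rw [WithLp.prod_inner_fst_snd, WithLp.prod_inner_fst_snd, hWfst, hWfst,
    lp.inner_eq_inner_zero_add_of_succ (hWsucc x) (hWsucc z), hWzero, hWzero, ← add_assoc,
    inner_add_inner_of_defect hD hD2]

end Dilation

theorem schaffer_blocks_general {H : Type*} [NormedAddCommGroup H] [InnerProductSpace ℂ H]
    [CompleteSpace H] (T D : H →L[ℂ] H)
    (hD : D.IsPositive) (hD2 : D * D = 1 - adjoint T * T)
    (Top F : Fin 6 → (H →L[ℂ] H))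
    (hfund : ∀ i, Top i - adjoint (Top (rev i)) * T = D * F i * D)
    (V7 : WithLp 2 (H × lp (fun _ : ℕ => H) 2) →L[ℂ] WithLp 2 (H × lp (fun _ : ℕ => H) 2))
    (hV7a : ∀ x : WithLp 2 (H × lp (fun _ : ℕ => H) 2),
      (WithLp.equiv 2 _ (V7 x)).1 = T (WithLp.equiv 2 _ x).1)
    (hV7b : ∀ x : WithLp 2 (H × lp (fun _ : ℕ => H) 2),
      ((WithLp.equiv 2 _ (V7 x)).2) 0 = D (WithLp.equiv 2 _ x).1)
    (hV7c : ∀ (x : WithLp 2 (H × lp (fun _ : ℕ => H) 2)) (n : ℕ),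
      ((WithLp.equiv 2 _ (V7 x)).2) (n + 1) = ((WithLp.equiv 2 _ x).2) n)
    (V : Fin 6 →
      (WithLp 2 (H × lp (fun _ : ℕ => H) 2) →L[ℂ] WithLp 2 (H × lp (fun _ : ℕ => H) 2)))
    (hVa : ∀ (i : Fin 6) (x : WithLp 2 (H × lp (fun _ : ℕ => H) 2)),
      (WithLp.equiv 2 _ (V i x)).1 = Top i (WithLp.equiv 2 _ x).1)
    (hVb : ∀ (i : Fin 6) (x : WithLp 2 (H × lp (fun _ : ℕ => H) 2)),
      ((WithLp.equiv 2 _ (V i x)).2) 0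
        = adjoint (F (rev i)) (D (WithLp.equiv 2 _ x).1)
          + F i (((WithLp.equiv 2 _ x).2) 0))
    (hVc : ∀ (i : Fin 6) (x : WithLp 2 (H × lp (fun _ : ℕ => H) 2)) (n : ℕ),
      ((WithLp.equiv 2 _ (V i x)).2) (n + 1)
        = F i (((WithLp.equiv 2 _ x).2) (n + 1))
          + adjoint (F (rev i)) (((WithLp.equiv 2 _ x).2) n)) :
    (∀ x, ‖V7 x‖ = ‖x‖) ∧ ∀ i : Fin 6, V i = adjoint (V (rev i)) ∘L V7 := by
  simp only [WithLp.equiv_apply, WithLp.ofLp_fst, WithLp.ofLp_snd] at hV7a hV7b hV7c hVa hVb hVc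
  have hVsnd : ∀ i x,
      (V i x).snd = lpDiag (F i) x.snd + lpDiag (adjoint (F (rev i))) (V7 x).snd := by
    intro i x
    ext (_ | n) <;> simp [hVb, hVc, hV7b, hV7c, add_comm]
  refine ⟨(V7.toLinearMap.isometryOfInner
    (inner_map_map_of_defect_shift hD.isSelfAdjoint hD2 hV7a hV7b hV7c)).norm_map, fun i => ?_⟩
  ext1 x
  refine ext_inner_right ℂ fun z => ?_
  rw [comp_apply, adjoint_inner_left, WithLp.prod_inner_fst_snd, WithLp.prod_inner_fst_snd,
    hVa, hVa, hV7a, inner_apply_eq_of_fundamental hD.isSelfAdjoint (hfund i), hVsnd, hVsnd,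
    rev_rev, inner_add_left, inner_add_right, inner_lpDiag_left (adjoint (F (rev i))),
    adjoint_adjoint, ← inner_lpDiag_left (F i), inner_lpDiag_snd_of_shift hV7b hV7c]
  ring

/-- Schäffer-type dilation: let `T = T₇` be a contraction on a complex Hilbert space `H`
with defect operator `D = D_{T₇}`, and `T₁, …, T₆` bounded operators satisfying the
fundamental equations `Tᵢ - T*_{7-i} T₇ = D Fᵢ D` with `w(Fᵢ + F*_{7-i} z) ≤ 1` on `𝕋`.
On the model space `H ⊕ H²(𝒟_{T₇})` (realized as `WithLp 2 (H × ℓ²(ℕ, H))`) consider the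
block operators `V⁽⁷⁾ = (T 0; D M_z)` and `V⁽ⁱ⁾ = (Tᵢ 0; F*_{7-i}D M_{Fᵢ + F*_{7-i}z})`,
described coefficient-wise below.  Then `V⁽⁷⁾` is an isometry and
`V⁽ⁱ⁾ = V⁽⁷⁻ⁱ⁾* V⁽⁷⁾` for every `1 ≤ i ≤ 6`. -/
theorem schaffer_blocks {H : Type*} [NormedAddCommGroup H] [InnerProductSpace ℂ H]
    [CompleteSpace H] (T D : H →L[ℂ] H) (hT : ‖T‖ ≤ 1)
    (hD : D.IsPositive) (hD2 : D * D = 1 - adjoint T * T)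
    (Top F : Fin 6 → (H →L[ℂ] H))
    (hw : ∀ (i : Fin 6) (z : ℂ), ‖z‖ = 1 →
      numRadius (F i + z • adjoint (F (rev i))) ≤ 1)
    (hfund : ∀ i, Top i - adjoint (Top (rev i)) * T = D * F i * D)
    (V7 : WithLp 2 (H × lp (fun _ : ℕ => H) 2) →L[ℂ] WithLp 2 (H × lp (fun _ : ℕ => H) 2))
    (hV7a : ∀ x : WithLp 2 (H × lp (fun _ : ℕ => H) 2),
      (WithLp.equiv 2 _ (V7 x)).1 = T (WithLp.equiv 2 _ x).1)
    (hV7b : ∀ x : WithLp 2 (H × lp (fun _ : ℕ => H) 2),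
      ((WithLp.equiv 2 _ (V7 x)).2) 0 = D (WithLp.equiv 2 _ x).1)
    (hV7c : ∀ (x : WithLp 2 (H × lp (fun _ : ℕ => H) 2)) (n : ℕ),
      ((WithLp.equiv 2 _ (V7 x)).2) (n + 1) = ((WithLp.equiv 2 _ x).2) n)
    (V : Fin 6 →
      (WithLp 2 (H × lp (fun _ : ℕ => H) 2) →L[ℂ] WithLp 2 (H × lp (fun _ : ℕ => H) 2)))
    (hVa : ∀ (i : Fin 6) (x : WithLp 2 (H × lp (fun _ : ℕ => H) 2)),
      (WithLp.equiv 2 _ (V i x)).1 = Top i (WithLp.equiv 2 _ x).1)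
    (hVb : ∀ (i : Fin 6) (x : WithLp 2 (H × lp (fun _ : ℕ => H) 2)),
      ((WithLp.equiv 2 _ (V i x)).2) 0
        = adjoint (F (rev i)) (D (WithLp.equiv 2 _ x).1)
          + F i (((WithLp.equiv 2 _ x).2) 0))
    (hVc : ∀ (i : Fin 6) (x : WithLp 2 (H × lp (fun _ : ℕ => H) 2)) (n : ℕ),
      ((WithLp.equiv 2 _ (V i x)).2) (n + 1)
        = F i (((WithLp.equiv 2 _ x).2) (n + 1))
          + adjoint (F (rev i)) (((WithLp.equiv 2 _ x).2) n)) :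
    (∀ x, ‖V7 x‖ = ‖x‖) ∧ ∀ i : Fin 6, V i = adjoint (V (rev i)) ∘L V7 :=
  schaffer_blocks_general T D hD hD2 Top F hfund V7 hV7a hV7b hV7c V hVa hVb hVc
end
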